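/- Let A : ℝⁿ × ℝ → ℝⁿ and B, C : ℝⁿ × ℝ → ℝ be given coefficient functions. Suppose u : ℝⁿ × ℝ → ℝ is twice continuously differentiable in the spatial variables and continuously differentiable in time, and solves the homogeneous second-order PDE Δu = A·∇u + B·∂ₜu + C·u (all derivatives spatial except ∂ₜ). Suppose Γ : ℝⁿ × ℝ → ℝ is twice continuously differentiable in space, continuously differentiable in time, and harmonic in the spatial variables (Δ_x Γ(x,t) = 0 for all (x,t)). If the product Γ·u also solves the same PDE Δ(Γu) = A·∇(Γu) + B·∂ₜ(Γu) + C·(Γu), then at every point 2⟨∇Γ, ∇u⟩ = u·(A·∇Γ + B·∂ₜΓ). -/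

import Mathlib

open scoped InnerProductSpace

/-!
Expanding `Δ(Γu)`, `∇(Γu)` and `∂ₜ(Γu)` by the Leibniz rule gives
`Δ(Γu) = Γ Δu + u ΔΓ + 2⟨∇Γ, ∇u⟩` together with the analogous first-order identities.
Substituting these into the equation for `Γu`, subtracting `Γ` times the equation for `u` and
using `ΔΓ = 0` leaves exactly `2⟨∇Γ, ∇u⟩ = u (A·∇Γ + B ∂ₜΓ)`.
-/

/-- Spatial partial derivative in the `i`-th coordinate direction of
`u : ℝⁿ × ℝ → ℝ` (time held fixed). -/
noncomputable def spderiv {n : ℕ} (i : Fin n) (u : EuclideanSpace ℝ (Fin n) × ℝ → ℝ)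
    (p : EuclideanSpace ℝ (Fin n) × ℝ) : ℝ :=
  fderiv ℝ (fun y => u (y, p.2)) p.1 (EuclideanSpace.single i 1)

/-- Spatial gradient of `u : ℝⁿ × ℝ → ℝ` as a vector in `ℝⁿ`. -/
noncomputable def sgrad {n : ℕ} (u : EuclideanSpace ℝ (Fin n) × ℝ → ℝ)
    (p : EuclideanSpace ℝ (Fin n) × ℝ) : EuclideanSpace ℝ (Fin n) :=
  (EuclideanSpace.equiv (Fin n) ℝ).symm fun i => spderiv i u p

/-- Spatial Laplacian of `u : ℝⁿ × ℝ → ℝ`: the sum of the second spatial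
partial derivatives. -/
noncomputable def slap {n : ℕ} (u : EuclideanSpace ℝ (Fin n) × ℝ → ℝ)
    (p : EuclideanSpace ℝ (Fin n) × ℝ) : ℝ :=
  ∑ i, spderiv i (spderiv i u) p

/-- Partial derivative in the time (last) coordinate of `u : ℝⁿ × ℝ → ℝ`. -/
noncomputable def tderiv' {n : ℕ} (u : EuclideanSpace ℝ (Fin n) × ℝ → ℝ)
    (p : EuclideanSpace ℝ (Fin n) × ℝ) : ℝ :=
  deriv (fun s => u (p.1, s)) p.2

section Leibniz

variable {𝕜 : Type*} [NontriviallyNormedField 𝕜] {E : Type*} [NormedAddCommGroup E]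
  [NormedSpace 𝕜 E] {F G : E → 𝕜}

theorem fderiv_mul_apply {x : E} (hF : DifferentiableAt 𝕜 F x) (hG : DifferentiableAt 𝕜 G x)
    (v : E) :
    fderiv 𝕜 (fun y => F y * G y) x v = F x * fderiv 𝕜 G x v + G x * fderiv 𝕜 F x v := by
  simp [fderiv_fun_mul hF hG]

theorem ContDiff.differentiable_fderiv_apply (hF : ContDiff 𝕜 2 F) (v : E) :
    Differentiable 𝕜 fun y => fderiv 𝕜 F y v :=
  ((hF.fderiv_right (m := 1) (by norm_num)).clm_apply contDiff_const).differentiable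
    one_ne_zero

theorem fderiv_fderiv_mul_apply (hF : ContDiff 𝕜 2 F) (hG : ContDiff 𝕜 2 G) (x v : E) :
    fderiv 𝕜 (fun y => fderiv 𝕜 (fun z => F z * G z) y v) x v
      = F x * fderiv 𝕜 (fun y => fderiv 𝕜 G y v) x v
        + G x * fderiv 𝕜 (fun y => fderiv 𝕜 F y v) x v
        + 2 * (fderiv 𝕜 F x v * fderiv 𝕜 G x v) := by
  have dF := hF.differentiable (by norm_num)
  have dG := hG.differentiable (by norm_num)
  have dF' := hF.differentiable_fderiv_apply v
  have dG' := hG.differentiable_fderiv_apply v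
  have hFG : (fun y => fderiv 𝕜 (fun z => F z * G z) y v)
      = fun y => F y * fderiv 𝕜 G y v + G y * fderiv 𝕜 F y v :=
    funext fun y => fderiv_mul_apply (dF y) (dG y) v
  rw [hFG, fderiv_fun_add (f := fun y => F y * fderiv 𝕜 G y v)
      (g := fun y => G y * fderiv 𝕜 F y v) ((dF x).mul (dG' x)) ((dG x).mul (dF' x)), add_apply,
    fderiv_mul_apply (dF x) (dG' x), fderiv_mul_apply (dG x) (dF' x)]
  ring

end Leibniz

section SpaceTime

variable {n : ℕ} {f g : EuclideanSpace ℝ (Fin n) × ℝ → ℝ} {p : EuclideanSpace ℝ (Fin n) × ℝ}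

@[simp]
theorem sgrad_apply (f : EuclideanSpace ℝ (Fin n) × ℝ → ℝ) (p : EuclideanSpace ℝ (Fin n) × ℝ)
    (i : Fin n) : sgrad f p i = spderiv i f p := rfl

theorem inner_sgrad_sgrad : ⟪sgrad f p, sgrad g p⟫_ℝ = ∑ i, spderiv i f p * spderiv i g p := by
  simp [PiLp.inner_apply, mul_comm]

theorem spderiv_mul (hf : DifferentiableAt ℝ (fun x => f (x, p.2)) p.1)
    (hg : DifferentiableAt ℝ (fun x => g (x, p.2)) p.1) (i : Fin n) :
    spderiv i (fun q => f q * g q) p = f p * spderiv i g p + g p * spderiv i f p :=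
  fderiv_mul_apply hf hg _

theorem sgrad_mul (hf : DifferentiableAt ℝ (fun x => f (x, p.2)) p.1)
    (hg : DifferentiableAt ℝ (fun x => g (x, p.2)) p.1) :
    sgrad (fun q => f q * g q) p = f p • sgrad g p + g p • sgrad f p := by
  ext i
  simp [spderiv_mul hf hg]

theorem spderiv_spderiv_mul (hf : ContDiff ℝ 2 fun x => f (x, p.2))
    (hg : ContDiff ℝ 2 fun x => g (x, p.2)) (i : Fin n) :
    spderiv i (spderiv i fun q => f q * g q) p
      = f p * spderiv i (spderiv i g) p + g p * spderiv i (spderiv i f) p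
        + 2 * (spderiv i f p * spderiv i g p) :=
  fderiv_fderiv_mul_apply hf hg _ _

theorem slap_mul (hf : ContDiff ℝ 2 fun x => f (x, p.2)) (hg : ContDiff ℝ 2 fun x => g (x, p.2)) :
    slap (fun q => f q * g q) p
      = f p * slap g p + g p * slap f p + 2 * ⟪sgrad f p, sgrad g p⟫_ℝ := by
  simp only [slap, spderiv_spderiv_mul hf hg, inner_sgrad_sgrad, Finset.sum_add_distrib,
    Finset.mul_sum]

theorem tderiv'_mul (hf : DifferentiableAt ℝ (fun t => f (p.1, t)) p.2)
    (hg : DifferentiableAt ℝ (fun t => g (p.1, t)) p.2) :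
    tderiv' (fun q => f q * g q) p = f p * tderiv' g p + g p * tderiv' f p := by
  unfold tderiv'
  rw [deriv_fun_mul hf hg]
  ring

end SpaceTime

/-- Harmonic reduction identity (Theorem 0.1, linear case): if `u` and `Γ·u`
both solve `Δu = A·∇u + B ∂ₜu + C u`, with `Γ` spatially harmonic, then
`2⟨∇Γ, ∇u⟩ = u (A·∇Γ + B ∂ₜΓ)`. -/
theorem harmonic_reduction {n : ℕ}
    (A : EuclideanSpace ℝ (Fin n) × ℝ → EuclideanSpace ℝ (Fin n))
    (B C : EuclideanSpace ℝ (Fin n) × ℝ → ℝ)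
    (u Γ : EuclideanSpace ℝ (Fin n) × ℝ → ℝ)
    (hu_space : ∀ t, ContDiff ℝ 2 fun x => u (x, t))
    (hu_time : ∀ x, ContDiff ℝ 1 fun t => u (x, t))
    (hΓ_space : ∀ t, ContDiff ℝ 2 fun x => Γ (x, t))
    (hΓ_time : ∀ x, ContDiff ℝ 1 fun t => Γ (x, t))
    (hharm : ∀ p, slap Γ p = 0)
    (hPDE : ∀ p, slap u p
      = ⟪A p, sgrad u p⟫_ℝ + B p * tderiv' u p + C p * u p)
    (hPDE' : ∀ p, slap (fun q => Γ q * u q) p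
      = ⟪A p, sgrad (fun q => Γ q * u q) p⟫_ℝ
        + B p * tderiv' (fun q => Γ q * u q) p + C p * (Γ p * u p)) :
    ∀ p, 2 * ⟪sgrad Γ p, sgrad u p⟫_ℝ
      = u p * (⟪A p, sgrad Γ p⟫_ℝ + B p * tderiv' Γ p) := by
  intro p
  have h := hPDE' p
  rw [slap_mul (hΓ_space p.2) (hu_space p.2), hharm p,
    sgrad_mul ((hΓ_space p.2).differentiable (by norm_num) _)
      ((hu_space p.2).differentiable (by norm_num) _),
    tderiv'_mul ((hΓ_time p.1).differentiable one_ne_zero _)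
      ((hu_time p.1).differentiable one_ne_zero _),
    inner_add_right, real_inner_smul_right, real_inner_smul_right] at h
  linear_combination h - Γ p * hPDE p
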